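/- arXiv:1808.02879 — 3 statements merged into one kernel-verified Lean document; each statement's English description precedes it below -/
import Mathlib

section
/- Let q, m, n be positive integers with gcd(mn, q) = 1. Then Σ_χ χ(m)·conj(χ(n)) = (1/2)·[ Σ_{d | q, d | (m−n)} φ(d) μ(q/d) + Σ_{d | q, d | (m+n)} φ(d) μ(q/d) ], where the sum on the left runs over all even primitive ℂ-valued Dirichlet characters χ mod q, and on the right d runs over positive divisors of q that divide the integer m−n (respectively m+n). -/
open Complex DirichletCharacter Finset


open Complex

lemma exists_unit_lift (e d c : ℕ) (he : e ≠ 0) (hd : d ∣ e) (hc : c ∣ e) (x : (ZMod d)ˣ)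
    (hx : ZMod.unitsMap (Nat.gcd_dvd_left d c) x = 1) :
    ∃ y : (ZMod e)ˣ, ZMod.unitsMap hd y = x ∧ ZMod.unitsMap hc y = 1 := by
  haveI : NeZero e := ⟨he⟩
  obtain ⟨y₀, hy₀⟩ := ZMod.unitsMap_surjective hd x
  set g : ℕ := Nat.gcd d c with hg
  set Y : ℕ := ((y₀ : ZMod e)).val with hY
  have hYd : ((Y : ℤ) : ZMod d) = (x : ZMod d) := by
    push_cast
    rw [ZMod.natCast_val, ← hy₀]
    rfl
  have hYg : ((Y : ℕ) : ZMod g) = 1 := by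
    have h1 : ZMod.unitsMap (Nat.gcd_dvd_left d c) (ZMod.unitsMap hd y₀) = 1 := by
      rw [hy₀]; exact hx
    have h2 : ((ZMod.unitsMap (dvd_trans (Nat.gcd_dvd_left d c) hd) y₀ : (ZMod g)ˣ) : ZMod g) = 1 := by
      rw [← ZMod.unitsMap_comp (Nat.gcd_dvd_left d c) hd]
      simp [h1]
    rw [ZMod.unitsMap_def] at h2
    simp only [Units.coe_map, MonoidHom.coe_coe] at h2
    rw [ZMod.natCast_val]
    exact h2
  have hgdvd : (g : ℤ) ∣ (Y : ℤ) - 1 := by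
    rw [← ZMod.intCast_zmod_eq_zero_iff_dvd]
    push_cast [hYg]
    ring
  obtain ⟨t, ht⟩ := hgdvd
  set a : ℤ := Int.gcdA d c
  set b : ℤ := Int.gcdB d c
  have hbez : (g : ℤ) = d * a + c * b := Int.gcd_eq_gcd_ab d c
  set z : ℤ := (Y : ℤ) - d * a * t with hz
  have hzd : (d : ℤ) ∣ z - Y := ⟨-(a*t), by rw [hz]; ring⟩
  have hzc : (c : ℤ) ∣ z - 1 := ⟨b * t, by linear_combination ht + t * hbez⟩
  -- z is coprime to d and to c, hence to lcm d c
  have hYcop : Nat.Coprime Y e := ZMod.val_coe_unit_coprime y₀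
  have hcop_d : IsCoprime z (d : ℤ) := by
    have h1 : IsCoprime (Y : ℤ) (d : ℤ) := by
      rw [Int.isCoprime_iff_gcd_eq_one]
      simpa [Int.gcd_natCast_natCast] using Nat.Coprime.coprime_dvd_right hd hYcop
    obtain ⟨k, hk⟩ := hzd
    rw [sub_eq_iff_eq_add, add_comm] at hk
    rw [hk]
    exact h1.add_mul_left_left k
  have hcop_c : IsCoprime z (c : ℤ) := by
    obtain ⟨k, hk⟩ := hzc
    rw [sub_eq_iff_eq_add, add_comm] at hk
    rw [hk]
    exact (isCoprime_one_left (x := (c:ℤ))).add_mul_left_left k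
  set L : ℕ := Nat.lcm d c with hL
  have hLe : L ∣ e := Nat.lcm_dvd hd hc
  have hcop_L : IsCoprime z (L : ℤ) := by
    have : IsCoprime z ((d * c : ℕ) : ℤ) := by push_cast; exact hcop_d.mul_right hcop_c
    exact IsCoprime.of_isCoprime_of_dvd_right this (Int.natCast_dvd_natCast.mpr (Nat.lcm_dvd_mul d c))
  -- z is a unit mod L
  have hunit : IsUnit ((z : ZMod L)) := by
    obtain ⟨u, v, huv⟩ := hcop_L
    refine IsUnit.of_mul_eq_one ((u : ZMod L)) ?_
    have := congrArg (fun w : ℤ => (w : ZMod L)) huv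
    push_cast at this
    simpa [ZMod.natCast_self, mul_comm] using this
  obtain ⟨y, hy⟩ := ZMod.unitsMap_surjective hLe hunit.unit
  have hvald : ((ZMod.unitsMap hd y : (ZMod d)ˣ) : ZMod d) = ((z : ℤ) : ZMod d) := by
    have h1 : ZMod.unitsMap (Nat.dvd_lcm_left d c) (ZMod.unitsMap hLe y)
        = ZMod.unitsMap hd y := by
      rw [← MonoidHom.comp_apply, ZMod.unitsMap_comp]
    rw [← h1, hy, ZMod.unitsMap_def]
    simp only [Units.coe_map, MonoidHom.coe_coe, IsUnit.unit_spec]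
    exact map_intCast (ZMod.castHom (Nat.dvd_lcm_left d c) (ZMod d)) z
  have hvalc : ((ZMod.unitsMap hc y : (ZMod c)ˣ) : ZMod c) = ((z : ℤ) : ZMod c) := by
    have h1 : ZMod.unitsMap (Nat.dvd_lcm_right d c) (ZMod.unitsMap hLe y)
        = ZMod.unitsMap hc y := by
      rw [← MonoidHom.comp_apply, ZMod.unitsMap_comp]
    rw [← h1, hy, ZMod.unitsMap_def]
    simp only [Units.coe_map, MonoidHom.coe_coe, IsUnit.unit_spec]
    exact map_intCast (ZMod.castHom (Nat.dvd_lcm_right d c) (ZMod c)) z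
  refine ⟨y, ?_, ?_⟩
  · rw [← Units.val_inj, hvald]
    have : ((z - Y : ℤ) : ZMod d) = 0 := (ZMod.intCast_zmod_eq_zero_iff_dvd _ d).mpr hzd
    push_cast at this
    rw [sub_eq_zero] at this
    rw [this]
    exact_mod_cast hYd
  · rw [← Units.val_inj, hvalc]
    have : ((z - 1 : ℤ) : ZMod c) = 0 := (ZMod.intCast_zmod_eq_zero_iff_dvd _ c).mpr hzc
    push_cast at this
    rw [sub_eq_zero] at this
    rw [this]
    simp




lemma conductor_changeLevel {e d : ℕ} (he : e ≠ 0) (hd : d ∣ e) (ψ : DirichletCharacter ℂ d)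
    (hψ : ψ.IsPrimitive) : (changeLevel hd ψ).conductor = d := by
  haveI : NeZero e := ⟨he⟩
  haveI : NeZero d := ⟨fun h => he (Nat.eq_zero_of_zero_dvd (h ▸ hd))⟩
  set χ := changeLevel hd ψ with hχ
  set c := χ.conductor with hcdef
  have hc : c ∣ e := conductor_dvd_level χ
  have hcle : c ≤ d := Nat.sInf_le ⟨hd, ψ, rfl⟩
  have hker : (ZMod.unitsMap hc).ker ≤ χ.toUnitHom.ker :=
    (factorsThrough_iff_ker_unitsMap hc).mp (factorsThrough_conductor χ)
  have key : FactorsThrough ψ (Nat.gcd d c) := by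
    rw [factorsThrough_iff_ker_unitsMap (Nat.gcd_dvd_left d c)]
    intro x hx
    rw [MonoidHom.mem_ker] at hx
    obtain ⟨y, hy1, hy2⟩ := exists_unit_lift e d c he hd hc x hx
    rw [MonoidHom.mem_ker, ← hy1, ← MonoidHom.comp_apply, ← changeLevel_toUnitHom]
    exact hker (by rwa [MonoidHom.mem_ker])
  have h1 : ψ.conductor ≤ Nat.gcd d c := Nat.sInf_le key
  rw [hψ] at h1
  have h2 : d ∣ c := by
    have := Nat.le_antisymm (Nat.le_of_dvd (Nat.pos_of_ne_zero (NeZero.ne d)) (Nat.gcd_dvd_left d c)) h1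
    exact this ▸ Nat.gcd_dvd_right d c
  have hcpos : 0 < c := Nat.pos_of_ne_zero (conductor_ne_zero χ)
  exact le_antisymm hcle (Nat.le_of_dvd hcpos h2)




lemma eq_changeLevel_primitive {n : ℕ} (χ : DirichletCharacter ℂ n) :
    χ = changeLevel (conductor_dvd_level χ) χ.primitiveCharacter :=
  Classical.choose_spec (factorsThrough_conductor χ).choose_spec

open scoped Classical in
lemma sum_chars_eq_sum_divisors {e : ℕ} (he : e ≠ 0) (F : ∀ {d : ℕ}, DirichletCharacter ℂ d → ℂ)
    (hF : ∀ (d : ℕ) (hd : d ∣ e) (ψ : DirichletCharacter ℂ d), F (changeLevel hd ψ) = F ψ) :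
    ∑ χ : DirichletCharacter ℂ e, F χ
      = ∑ d ∈ e.divisors, ∑ ψ : DirichletCharacter ℂ d, if ψ.IsPrimitive then F ψ else 0 := by
  classical
  haveI : NeZero e := ⟨he⟩
  rw [← Finset.sum_fiberwise_of_maps_to
    (g := fun χ : DirichletCharacter ℂ e => χ.conductor)
    (fun χ _ => Nat.mem_divisors.mpr ⟨conductor_dvd_level χ, he⟩) F]
  refine Finset.sum_congr rfl (fun d hd => ?_)
  have hdvd : d ∣ e := (Nat.mem_divisors.mp hd).1
  rw [← Finset.sum_filter]
  refine (Finset.sum_bij (fun (ψ : DirichletCharacter ℂ d) (hψ : ψ ∈ univ.filter IsPrimitive)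
    => changeLevel hdvd ψ) ?_ ?_ ?_ ?_).symm
  · intro ψ hψ
    simp only [mem_filter, mem_univ, true_and] at hψ ⊢
    exact conductor_changeLevel he hdvd ψ hψ
  · intro ψ₁ h₁ ψ₂ h₂ h
    exact changeLevel_injective hdvd h
  · intro χ hχ
    simp only [mem_filter, mem_univ, true_and] at hχ
    subst hχ
    refine ⟨χ.primitiveCharacter, ?_, ?_⟩
    · simp only [mem_filter, mem_univ, true_and]
      exact χ.primitiveCharacter_isPrimitive
    · exact (eq_changeLevel_primitive χ).symm
  · intro ψ hψ
    exact (hF d hdvd ψ).symm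


-- conj of character value at unit is value at inverse
lemma conj_char_apply {d : ℕ} (χ : DirichletCharacter ℂ d) {a : ZMod d} (ha : IsUnit a) :
    (starRingEnd ℂ) (χ a) = χ a⁻¹ := by
  have hnorm : ‖χ a‖ = 1 := by
    have := χ.unit_norm_eq_one ha.unit
    rwa [IsUnit.unit_spec] at this
  have h1 : χ a * χ a⁻¹ = 1 := by
    rw [← map_mul, ZMod.mul_inv_of_unit a ha, map_one]
  have h2 : (starRingEnd ℂ) (χ a) = (χ a)⁻¹ := by
    rw [← Complex.inv_eq_conj]
    · simpa using hnorm
  rw [h2]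
  exact (eq_inv_of_mul_eq_one_right h1).symm

lemma zmod_mul_inv_eq_one {d : ℕ} {a b : ZMod d} (hb : IsUnit b) :
    a * b⁻¹ = 1 ↔ a = b := by
  constructor
  · intro h
    have := congrArg (· * b) h
    simpa [mul_assoc, ZMod.inv_mul_of_unit b hb] using this
  · rintro rfl
    exact ZMod.mul_inv_of_unit a hb

open scoped Classical in
lemma sum_even_chars {d : ℕ} [NeZero d] {M N : ZMod d} (hM : IsUnit M) (hN : IsUnit N) :
    ∑ χ : DirichletCharacter ℂ d, (if χ.Even then χ M * (starRingEnd ℂ) (χ N) else 0)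
      = (1/2 : ℂ) * ((if M = N then (d.totient : ℂ) else 0)
          + (if M = -N then (d.totient : ℂ) else 0)) := by
  set A : ZMod d := M * N⁻¹ with hA
  have key : ∑ χ : DirichletCharacter ℂ d, (χ A + χ (-A))
      = ∑ χ : DirichletCharacter ℂ d, (if χ.Even then 2 * (χ M * (starRingEnd ℂ) (χ N)) else 0) := by
    refine Finset.sum_congr rfl (fun χ _ => ?_)
    rcases χ.even_or_odd with hχ | hχ
    · rw [if_pos hχ, hχ.eval_neg, conj_char_apply χ hN, ← map_mul, ← hA]
      ring
    · rw [if_neg hχ.not_even, hχ.eval_neg]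
      ring
  have hsum : ∑ χ : DirichletCharacter ℂ d, (χ A + χ (-A))
      = (if A = 1 then (d.totient : ℂ) else 0) + (if -A = 1 then (d.totient : ℂ) else 0) := by
    rw [Finset.sum_add_distrib, DirichletCharacter.sum_characters_eq, DirichletCharacter.sum_characters_eq]
  have hMN : (A = 1) ↔ (M = N) := zmod_mul_inv_eq_one hN
  have hMN' : (-A = 1) ↔ (M = -N) := by
    rw [neg_eq_iff_eq_neg, hA]
    constructor
    · intro h
      have h3 : M * (N⁻¹ * N) = -1 * N := by rw [← mul_assoc, h]
      rwa [ZMod.inv_mul_of_unit N hN, mul_one, neg_one_mul] at h3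
    · rintro rfl
      rw [neg_mul, ZMod.mul_inv_of_unit N hN]
  have h2 : ∑ χ : DirichletCharacter ℂ d, (if χ.Even then χ M * (starRingEnd ℂ) (χ N) else 0)
      = (1/2 : ℂ) * ∑ χ : DirichletCharacter ℂ d, (χ A + χ (-A)) := by
    rw [key, Finset.mul_sum]
    refine Finset.sum_congr rfl (fun χ _ => ?_)
    split_ifs <;> ring
  rw [h2, hsum]
  simp only [hMN, hMN']


lemma changeLevel_even_iff {e d : ℕ} (hd : d ∣ e) (ψ : DirichletCharacter ℂ d) :
    (changeLevel hd ψ).Even ↔ ψ.Even := by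
  unfold DirichletCharacter.Even
  have h1 : ((-1 : (ZMod e)ˣ) : ZMod e) = (-1 : ZMod e) := Units.coe_neg_one
  have h : (changeLevel hd ψ) (-1 : ZMod e) = ψ (-1) := by
    rw [← h1, changeLevel_eq_cast_of_dvd ψ hd]
    congr 1
    rw [h1, ZMod.cast_neg hd, ZMod.cast_one hd]
  rw [h]

lemma changeLevel_natCast_eq {e d : ℕ} (k : ℕ) (hd : d ∣ e) (hk : Nat.Coprime k e)
    (ψ : DirichletCharacter ℂ d) : changeLevel hd ψ ((k : ZMod e)) = ψ ((k : ZMod d)) := by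
  have hu : ((ZMod.unitOfCoprime k hk : (ZMod e)ˣ) : ZMod e) = (k : ZMod e) :=
    ZMod.coe_unitOfCoprime k hk
  rw [← hu, changeLevel_eq_cast_of_dvd ψ hd]
  congr 1
  rw [hu, ZMod.cast_natCast hd]


theorem statement2 (q m n : ℕ) (hq : 0 < q) (hm : 0 < m) (hn : 0 < n)
    (hco : Nat.gcd (m * n) q = 1) :
    (∑' χ : {χ : DirichletCharacter ℂ q // χ.IsPrimitive ∧ χ.Even},
        χ.1 (m : ZMod q) * (starRingEnd ℂ) (χ.1 (n : ZMod q))) =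
      (1/2 : ℂ) *
        ((∑ d ∈ q.divisors.filter (fun d : ℕ => (d : ℤ) ∣ (m : ℤ) - (n : ℤ)),
            (Nat.totient d : ℂ) * ((ArithmeticFunction.moebius (q / d) : ℤ) : ℂ))
          + ∑ d ∈ q.divisors.filter (fun d : ℕ => (d : ℤ) ∣ (m : ℤ) + (n : ℤ)),
            (Nat.totient d : ℂ) * ((ArithmeticFunction.moebius (q / d) : ℤ) : ℂ)) := by
  classical
  have hq0 : q ≠ 0 := hq.ne'
  haveI : NeZero q := ⟨hq0⟩
  have hcop : Nat.Coprime (m * n) q := hco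
  have hcm : Nat.Coprime m q := Nat.Coprime.coprime_dvd_left (dvd_mul_right m n) hcop
  have hcn : Nat.Coprime n q := Nat.Coprime.coprime_dvd_left (dvd_mul_left n m) hcop
  set f : ℕ → ℂ := fun d => ∑ ψ : DirichletCharacter ℂ d,
    if ψ.IsPrimitive then
      (if ψ.Even then ψ (m : ZMod d) * (starRingEnd ℂ) (ψ (n : ZMod d)) else 0) else 0 with hf
  set g : ℕ → ℂ := fun e => ∑ χ : DirichletCharacter ℂ e,
    if χ.Even then χ (m : ZMod e) * (starRingEnd ℂ) (χ (n : ZMod e)) else 0 with hgdef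
  have stepA : ∀ e > 0, e ∈ {d : ℕ | d ∣ q} → ∑ i ∈ e.divisors, f i = g e := by
    intro e he hmem
    have he0 : e ≠ 0 := he.ne'
    have hme : Nat.Coprime m e := hcm.coprime_dvd_right hmem
    have hne : Nat.Coprime n e := hcn.coprime_dvd_right hmem
    have key := sum_chars_eq_sum_divisors he0
      (F := fun {d} χ => if χ.Even then χ (m : ZMod d) * (starRingEnd ℂ) (χ (n : ZMod d)) else 0)
      (fun d hd ψ => by
        simp only [changeLevel_even_iff hd ψ, changeLevel_natCast_eq m hd hme ψ,
          changeLevel_natCast_eq n hd hne ψ])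
    beta_reduce at key
    simp only [hf, hgdef]
    exact key.symm
  have stepB := (ArithmeticFunction.sum_eq_iff_sum_mul_moebius_eq_on (R := ℂ)
    {d : ℕ | d ∣ q} (fun a b hab hb => hab.trans hb)).mp stepA q hq (dvd_refl q)
  rw [Nat.sum_divisorsAntidiagonal' (f := fun a b => ((ArithmeticFunction.moebius a : ℤ) : ℂ) * g b)]
    at stepB
  have stepC : ∀ d ∈ q.divisors, g d = (1/2 : ℂ) *
      ((if (d:ℤ) ∣ (m:ℤ) - n then (d.totient : ℂ) else 0)
        + (if (d:ℤ) ∣ (m:ℤ) + n then (d.totient : ℂ) else 0)) := by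
    intro d hd
    obtain ⟨hdq, -⟩ := Nat.mem_divisors.mp hd
    have hd0 : d ≠ 0 := fun h => hq0 (Nat.eq_zero_of_zero_dvd (h ▸ hdq))
    haveI : NeZero d := ⟨hd0⟩
    have hM : IsUnit ((m : ZMod d)) := (ZMod.isUnit_iff_coprime m d).mpr (hcm.coprime_dvd_right hdq)
    have hN : IsUnit ((n : ZMod d)) := (ZMod.isUnit_iff_coprime n d).mpr (hcn.coprime_dvd_right hdq)
    have c1 : ((m : ZMod d) = (n : ZMod d)) ↔ ((d:ℤ) ∣ (m:ℤ) - n) := by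
      rw [ZMod.natCast_eq_natCast_iff, Nat.modEq_iff_dvd]
      exact dvd_sub_comm
    have c2 : ((m : ZMod d) = -(n : ZMod d)) ↔ ((d:ℤ) ∣ (m:ℤ) + n) := by
      rw [eq_neg_iff_add_eq_zero]
      have h3 : ((m : ZMod d) + n) = ((m + n : ℕ) : ZMod d) := by push_cast; ring
      rw [h3, ZMod.natCast_eq_zero_iff, ← Int.natCast_dvd_natCast]
      push_cast
      rfl
    rw [hgdef]
    simp only []
    rw [sum_even_chars hM hN]
    simp only [c1, c2]
  -- left-hand side
  rw [tsum_fintype]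
  have hL : (∑ χ : {χ : DirichletCharacter ℂ q // χ.IsPrimitive ∧ χ.Even},
      χ.1 (m : ZMod q) * (starRingEnd ℂ) (χ.1 (n : ZMod q))) = f q := by
    rw [hf]
    rw [← Finset.sum_subtype
      (univ.filter (fun χ : DirichletCharacter ℂ q => χ.IsPrimitive ∧ χ.Even))
      (by simp) (fun χ : DirichletCharacter ℂ q => χ (m : ZMod q) * (starRingEnd ℂ) (χ (n : ZMod q)))]
    rw [Finset.sum_filter]
    refine Finset.sum_congr rfl (fun χ _ => ?_)
    by_cases h1 : χ.IsPrimitive <;> by_cases h2 : χ.Even <;> simp [h1, h2]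
  rw [hL, ← stepB]
  have trans1 : ∑ d ∈ q.divisors, ((ArithmeticFunction.moebius (q/d) : ℤ) : ℂ) * g d
      = (1/2 : ℂ) * ∑ d ∈ q.divisors,
        ((if (d:ℤ) ∣ (m:ℤ) - n then (d.totient : ℂ) * ((ArithmeticFunction.moebius (q/d) : ℤ) : ℂ) else 0)
          + (if (d:ℤ) ∣ (m:ℤ) + n then (d.totient : ℂ) * ((ArithmeticFunction.moebius (q/d) : ℤ) : ℂ) else 0)) := by
    rw [Finset.mul_sum]
    refine Finset.sum_congr rfl (fun d hd => ?_)
    rw [stepC d hd]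
    split_ifs <;> ring
  rw [trans1, Finset.sum_add_distrib, ← Finset.sum_filter, ← Finset.sum_filter]
end

section
/- Let u and v be coprime positive integers and let s ∈ ℂ with Re s > 0. Then the series Σ_{ℓ ≥ 1, gcd(ℓ,v)=1} 1/( φ(uℓ) · ℓ^s ) converges absolutely and equals (1/φ(u)) · ζ(1+s) · R(s; u, v). -/
open Complex
open scoped Classical

/-- `R(s;u,v) = ∏_{p|v}(1 − p^{−s−1}) · ∏_{p∤uv}(1 + 1/(p^{s+1}(p−1)))`. -/
noncomputable def Rfun (s : ℂ) (u v : ℕ) : ℂ :=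
  (∏ p ∈ v.primeFactors, (1 - (p : ℂ) ^ (-s - 1))) *
    ∏' p : Nat.Primes, if (p : ℕ) ∣ u * v then 1 else
      (1 + 1 / (((p : ℕ) : ℂ) ^ (s + 1) * (((p : ℕ) : ℂ) - 1)))

lemma totient_key (u m n : ℕ) (hu : 0 < u) (hn : 0 < n) (hmn : Nat.Coprime m n) :
    Nat.totient u * Nat.totient (u * (m * n)) =
      Nat.totient (u * m) * Nat.totient (u * n) := by
  have hd : Nat.gcd (u * m) n = Nat.gcd u n := Nat.Coprime.gcd_mul_right_cancel u hmn
  have L1 := Nat.totient_gcd_mul_totient_mul (u * m) n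
  have L2 := Nat.totient_gcd_mul_totient_mul u n
  rw [hd] at L1
  have hdpos : 0 < Nat.totient (Nat.gcd u n) :=
    Nat.totient_pos.mpr (Nat.gcd_pos_of_pos_left n hu)
  have hnpos : 0 < Nat.totient n := Nat.totient_pos.mpr hn
  have hgpos : 0 < Nat.gcd u n := Nat.gcd_pos_of_pos_left n hu
  have key : (Nat.totient (Nat.gcd u n) * Nat.totient n * Nat.gcd u n) *
      (Nat.totient u * Nat.totient (u * (m * n))) =
      (Nat.totient (Nat.gcd u n) * Nat.totient n * Nat.gcd u n) *
      (Nat.totient (u * m) * Nat.totient (u * n)) := by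
    have : u * (m * n) = u * m * n := by ring
    rw [this]
    calc Nat.totient (Nat.gcd u n) * Nat.totient n * Nat.gcd u n *
        (Nat.totient u * Nat.totient (u * m * n))
        = (Nat.totient (Nat.gcd u n) * Nat.totient (u * m * n)) *
          (Nat.totient u * Nat.totient n * Nat.gcd u n) := by ring
      _ = (Nat.totient (u * m) * Nat.totient n * Nat.gcd u n) *
          (Nat.totient (Nat.gcd u n) * Nat.totient (u * n)) := by rw [L1, L2]
      _ = _ := by ring
  exact Nat.eq_of_mul_eq_mul_left (by positivity) key

noncomputable def Gfun (u v : ℕ) (s : ℂ) (ℓ : ℕ) : ℂ :=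
  (Nat.totient u : ℂ) *
    (if 1 ≤ ℓ ∧ Nat.gcd ℓ v = 1 then
      1 / ((Nat.totient (u * ℓ) : ℂ) * (ℓ : ℂ) ^ s) else 0)

lemma Gfun_zero (u v : ℕ) (s : ℂ) : Gfun u v s 0 = 0 := by simp [Gfun]

lemma Gfun_one (u v : ℕ) (s : ℂ) (hu : 0 < u) : Gfun u v s 1 = 1 := by
  have : (Nat.totient u : ℂ) ≠ 0 := by
    exact_mod_cast (Nat.totient_pos.mpr hu).ne'
  simp [Gfun, this]

lemma natCast_mul_cpow (m n : ℕ) (s : ℂ) :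
    ((m * n : ℕ) : ℂ) ^ s = ((m : ℕ) : ℂ) ^ s * ((n : ℕ) : ℂ) ^ s := by
  push_cast
  rw [← ofReal_natCast m, ← ofReal_natCast n]
  exact mul_cpow_ofReal_nonneg m.cast_nonneg n.cast_nonneg s

lemma Gfun_mul (u v : ℕ) (s : ℂ) (hu : 0 < u) {m n : ℕ} (hmn : Nat.Coprime m n) :
    Gfun u v s (m * n) = Gfun u v s m * Gfun u v s n := by
  rcases Nat.eq_zero_or_pos m with hm | hm
  · subst hm
    have hn1 : n = 1 := by simpa [Nat.Coprime] using hmn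
    simp [hn1, Gfun_zero, Gfun_one u v s hu]
  rcases Nat.eq_zero_or_pos n with hn | hn
  · subst hn
    have hm1 : m = 1 := by simpa [Nat.Coprime] using hmn
    simp [hm1, Gfun_zero, Gfun_one u v s hu]
  have hcond : (1 ≤ m * n ∧ Nat.gcd (m * n) v = 1) ↔
      ((1 ≤ m ∧ Nat.gcd m v = 1) ∧ (1 ≤ n ∧ Nat.gcd n v = 1)) := by
    constructor
    · rintro ⟨-, h⟩
      have := (Nat.coprime_mul_iff_left (k := v) (m := m) (n := n)).mp h
      exact ⟨⟨hm, this.1⟩, ⟨hn, this.2⟩⟩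
    · rintro ⟨⟨-, h1⟩, ⟨-, h2⟩⟩
      exact ⟨Nat.one_le_iff_ne_zero.mpr (by positivity), Nat.Coprime.mul h1 h2⟩
  by_cases H : 1 ≤ m * n ∧ Nat.gcd (m * n) v = 1
  · have H' := hcond.mp H
    rw [Gfun, Gfun, Gfun, if_pos H, if_pos H'.1, if_pos H'.2]
    have hkey := totient_key u m n hu hn hmn
    have hkeyC : (Nat.totient u : ℂ) * (Nat.totient (u * (m * n)) : ℂ) =
        (Nat.totient (u * m) : ℂ) * (Nat.totient (u * n) : ℂ) := by exact_mod_cast hkey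
    have hcpow := natCast_mul_cpow m n s
    have h1 : (Nat.totient (u * m) : ℂ) ≠ 0 := by
      exact_mod_cast (Nat.totient_pos.mpr (by positivity)).ne'
    have h2 : (Nat.totient (u * n) : ℂ) ≠ 0 := by
      exact_mod_cast (Nat.totient_pos.mpr (by positivity)).ne'
    have h3 : (Nat.totient (u * (m * n)) : ℂ) ≠ 0 := by
      exact_mod_cast (Nat.totient_pos.mpr (by positivity)).ne'
    have h4 : ((m : ℕ) : ℂ) ^ s ≠ 0 := by
      simp [Complex.cpow_eq_zero_iff, hm.ne']
    have h5 : ((n : ℕ) : ℂ) ^ s ≠ 0 := by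
      simp [Complex.cpow_eq_zero_iff, hn.ne']
    push_cast at hcpow ⊢
    rw [hcpow]
    field_simp
    rw [← mul_assoc] at hkeyC
    rw [show u * (m * n) = u * m * n from by ring] at h3 ⊢
    linear_combination (-(Nat.totient u : ℂ)) * hkeyC
  · have H' := hcond.not.mp H
    rw [Gfun, Gfun, Gfun, if_neg H]
    rcases not_and_or.mp H' with h | h
    · rw [if_neg h]; ring
    · rw [if_neg h]; ring
section Summability

variable {u v : ℕ} {s : ℂ}

lemma Gfun_norm_pow_le (v : ℕ) (hu : 0 < u) (hs : 0 < s.re) {p : ℕ} (hp : p.Prime) (e : ℕ) :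
    ‖Gfun u v s (p ^ e)‖ ≤
      (2 * Nat.totient u : ℝ) * ((p : ℝ) ^ (-(1 + s.re))) ^ e := by
  have hp1 : (1 : ℝ) < p := by exact_mod_cast hp.one_lt
  have hppos : (0 : ℝ) < p := by linarith
  have hφu : (1 : ℝ) ≤ Nat.totient u := by exact_mod_cast Nat.totient_pos.mpr hu
  have hr0 : (0 : ℝ) ≤ (p : ℝ) ^ (-(1 + s.re)) := Real.rpow_nonneg (by positivity) _
  rcases Nat.eq_zero_or_pos e with he | he
  · subst he
    rw [pow_zero, pow_zero, Gfun_one u v s hu, norm_one, mul_one]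
    linarith
  rw [Gfun]
  split_ifs with hcond
  swap
  · simp only [mul_zero, norm_zero]; positivity
  rw [norm_mul, norm_div, norm_one, norm_mul]
  have hpe : 0 < p ^ e := pow_pos hp.pos e
  set A : ℝ := ((p ^ e : ℕ) : ℝ) with hAdef
  have hApos : (0 : ℝ) < A := by positivity
  have hnormpow : ‖((p ^ e : ℕ) : ℂ) ^ s‖ = A ^ s.re :=
    Complex.norm_natCast_cpow_of_pos hpe s
  have htotpos : 0 < Nat.totient (u * p ^ e) := Nat.totient_pos.mpr (by positivity)
  set T : ℝ := (Nat.totient (u * p ^ e) : ℝ) with hTdef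
  have hTpos : (0 : ℝ) < T := by rw [hTdef]; exact_mod_cast htotpos
  have hdvd : Nat.totient (p ^ e) ≤ Nat.totient (u * p ^ e) :=
    Nat.le_of_dvd htotpos (Nat.totient_dvd_of_dvd ⟨u, mul_comm _ _⟩)
  have htot2 : p ^ e ≤ 2 * Nat.totient (p ^ e) := by
    rw [Nat.totient_prime_pow hp he]
    have h2p : p ≤ 2 * (p - 1) := by
      have := hp.two_le; omega
    calc p ^ e = p ^ (e - 1) * p := by
          rw [← pow_succ]; congr 1; omega
      _ ≤ p ^ (e - 1) * (2 * (p - 1)) := Nat.mul_le_mul_left _ h2p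
      _ = 2 * (p ^ (e - 1) * (p - 1)) := by ring
  have h2T : A ≤ 2 * T := by
    have h : p ^ e ≤ 2 * Nat.totient (u * p ^ e) := le_trans htot2 (by omega)
    rw [hAdef, hTdef]
    exact_mod_cast h
  have hA : A = (p : ℝ) ^ (e : ℝ) := by
    rw [hAdef]; push_cast; rw [← Real.rpow_natCast]
  have hre : ((p : ℝ) ^ (-(1 + s.re))) ^ e = (A * A ^ s.re)⁻¹ := by
    rw [hA, ← Real.rpow_natCast ((p : ℝ) ^ (-(1 + s.re))) e, ← Real.rpow_mul hppos.le,
      ← Real.rpow_mul hppos.le, ← Real.rpow_add hppos, ← Real.rpow_neg hppos.le]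
    congr 1; ring
  rw [hre, hnormpow, Complex.norm_natCast, Complex.norm_natCast, ← hTdef]
  have hAσ : (0 : ℝ) < A ^ s.re := Real.rpow_pos_of_pos hApos _
  rw [mul_one_div, ← div_eq_mul_inv, div_le_div_iff₀ (by positivity) (by positivity)]
  nlinarith [mul_nonneg (mul_nonneg (sub_nonneg.mpr h2T)
    (by linarith : (0:ℝ) ≤ (Nat.totient u : ℝ))) hAσ.le]

lemma Gfun_r_lt_one (hs : 0 < s.re) {p : ℕ} (hp : p.Prime) :
    (p : ℝ) ^ (-(1 + s.re)) < 1 := by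
  have hp1 : (1 : ℝ) < p := by exact_mod_cast hp.one_lt
  exact Real.rpow_lt_one_of_one_lt_of_neg hp1 (by linarith)

lemma Gfun_r_le_half (hs : 0 < s.re) {p : ℕ} (hp : p.Prime) :
    (p : ℝ) ^ (-(1 + s.re)) ≤ 1 / 2 := by
  have hp1 : (1 : ℝ) < p := by exact_mod_cast hp.one_lt
  have hp2 : (2 : ℝ) ≤ p := by exact_mod_cast hp.two_le
  rw [Real.rpow_neg (by positivity)]
  have h1 : (2 : ℝ) ≤ (p : ℝ) ^ (1 + s.re) := by
    calc (2 : ℝ) ≤ (p : ℝ) := hp2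
      _ = (p : ℝ) ^ (1 : ℝ) := (Real.rpow_one _).symm
      _ ≤ (p : ℝ) ^ (1 + s.re) := Real.rpow_le_rpow_of_exponent_le hp1.le (by linarith)
  rw [one_div]
  exact inv_anti₀ (by norm_num) h1

lemma Gfun_local_summable (v : ℕ) (hu : 0 < u) (hs : 0 < s.re) {p : ℕ} (hp : p.Prime) :
    Summable (fun e : ℕ => ‖Gfun u v s (p ^ e)‖) :=
  Summable.of_nonneg_of_le (fun _ => norm_nonneg _) (Gfun_norm_pow_le v hu hs hp)
    (Summable.mul_left _ (summable_geometric_of_lt_one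
      (Real.rpow_nonneg (by positivity) _) (Gfun_r_lt_one hs hp)))

lemma Gfun_local_tsum_le (v : ℕ) (hu : 0 < u) (hs : 0 < s.re) {p : ℕ} (hp : p.Prime) :
    (∑' e : ℕ, ‖Gfun u v s (p ^ e)‖) ≤
      1 + (4 * Nat.totient u : ℝ) * (p : ℝ) ^ (-(1 + s.re)) := by
  set r : ℝ := (p : ℝ) ^ (-(1 + s.re)) with hrdef
  have hr0 : (0 : ℝ) ≤ r := Real.rpow_nonneg (by positivity) _
  have hr1 : r < 1 := Gfun_r_lt_one hs hp
  have hrhalf : r ≤ 1 / 2 := Gfun_r_le_half hs hp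
  have hloc := Gfun_local_summable v hu hs hp (s := s)
  rw [Summable.tsum_eq_zero_add hloc]
  rw [pow_zero, Gfun_one u v s hu, norm_one]
  have hshift : Summable (fun e : ℕ => ‖Gfun u v s (p ^ (e + 1))‖) :=
    (summable_nat_add_iff 1).mpr hloc
  have hgeom : Summable (fun e : ℕ => (2 * Nat.totient u : ℝ) * r ^ (e + 1)) := by
    apply Summable.mul_left
    exact (summable_nat_add_iff 1).mpr (summable_geometric_of_lt_one hr0 hr1)
  have hle : (∑' e : ℕ, ‖Gfun u v s (p ^ (e + 1))‖) ≤
      ∑' e : ℕ, (2 * Nat.totient u : ℝ) * r ^ (e + 1) :=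
    Summable.tsum_le_tsum (fun e => Gfun_norm_pow_le v hu hs hp (e + 1)) hshift hgeom
  have hval : (∑' e : ℕ, (2 * Nat.totient u : ℝ) * r ^ (e + 1)) =
      (2 * Nat.totient u : ℝ) * (r * (1 - r)⁻¹) := by
    rw [tsum_mul_left]
    congr 1
    have : ∀ e : ℕ, r ^ (e + 1) = r * r ^ e := fun e => by rw [pow_succ]; ring
    simp_rw [this]
    rw [tsum_mul_left, tsum_geometric_of_lt_one hr0 hr1]
  have hinv : (1 - r)⁻¹ ≤ 2 := by
    rw [show (2 : ℝ) = (1/2 : ℝ)⁻¹ by norm_num]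
    apply inv_anti₀ <;> linarith
  have hφu : (0 : ℝ) ≤ Nat.totient u := by positivity
  have hfin : (2 * Nat.totient u : ℝ) * (r * (1 - r)⁻¹) ≤ (4 * Nat.totient u : ℝ) * r := by
    nlinarith [mul_nonneg (mul_nonneg hφu hr0) (sub_nonneg.mpr hinv)]
  rw [hval] at hle
  linarith

end Summability
lemma Gfun_summable_norm {u v : ℕ} {s : ℂ} (hu : 0 < u) (hs : 0 < s.re) :
    Summable (fun ℓ : ℕ => ‖Gfun u v s ℓ‖) := by
  set f : ℕ → ℝ := fun ℓ => ‖Gfun u v s ℓ‖ with hfdef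
  have hf0 : ∀ ℓ, 0 ≤ f ℓ := fun ℓ => norm_nonneg _
  have hf₁ : f 1 = 1 := by simp only [hfdef, Gfun_one u v s hu, norm_one]
  have hmul : ∀ {m n : ℕ}, Nat.Coprime m n → f (m * n) = f m * f n := by
    intro m n h
    simp only [hfdef, Gfun_mul u v s hu h, norm_mul]
  have hlocal : ∀ {p : ℕ}, p.Prime → Summable (fun e : ℕ => ‖f (p ^ e)‖) := by
    intro p hp
    simpa only [hfdef, norm_norm] using Gfun_local_summable v hu hs hp
  set Z : ℝ := ∑' n : ℕ, (n : ℝ) ^ (-(1 + s.re)) with hZdef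
  have hZsum : Summable (fun n : ℕ => (n : ℝ) ^ (-(1 + s.re))) :=
    Real.summable_nat_rpow.mpr (by linarith)
  set C : ℝ := Real.exp ((4 * Nat.totient u : ℝ) * Z) with hCdef
  have hprod_le : ∀ N : ℕ,
      (∏ p ∈ N.primesBelow, ∑' e : ℕ, f (p ^ e)) ≤ C := by
    intro N
    have step1 : (∏ p ∈ N.primesBelow, ∑' e : ℕ, f (p ^ e)) ≤
        ∏ p ∈ N.primesBelow, Real.exp ((4 * Nat.totient u : ℝ) * (p : ℝ) ^ (-(1 + s.re))) := by
      apply Finset.prod_le_prod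
      · intro p _
        exact tsum_nonneg fun e => hf0 _
      · intro p hp
        have hpp := Nat.prime_of_mem_primesBelow hp
        refine le_trans (Gfun_local_tsum_le v hu hs hpp) ?_
        have := Real.add_one_le_exp ((4 * Nat.totient u : ℝ) * (p : ℝ) ^ (-(1 + s.re)))
        linarith
    rw [← Real.exp_sum] at step1
    refine le_trans step1 (Real.exp_le_exp.mpr ?_)
    calc ∑ p ∈ N.primesBelow, (4 * Nat.totient u : ℝ) * (p : ℝ) ^ (-(1 + s.re))
        = (4 * Nat.totient u : ℝ) * ∑ p ∈ N.primesBelow, (p : ℝ) ^ (-(1 + s.re)) := by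
          rw [Finset.mul_sum]
      _ ≤ (4 * Nat.totient u : ℝ) * Z := by
          have hle := Summable.sum_le_tsum N.primesBelow
            (fun n _ => Real.rpow_nonneg (Nat.cast_nonneg n) _) hZsum
          have h4 : (0:ℝ) ≤ (4 * Nat.totient u : ℝ) := by positivity
          exact mul_le_mul_of_nonneg_left hle h4
  have key : ∀ n : ℕ, ∑ i ∈ Finset.range n, f i ≤ C := by
    intro n
    have HS := (EulerProduct.summable_and_hasSum_smoothNumbers_prod_primesBelow_tsum
      hf₁ hmul hlocal n).2
    rw [show (fun m : n.smoothNumbers => f m) = f ∘ (Subtype.val) from rfl,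
      hasSum_subtype_iff_indicator] at HS
    have hcongr : ∀ i ∈ Finset.range n, f i = Set.indicator n.smoothNumbers f i := by
      intro i hi
      rcases Nat.eq_zero_or_pos i with rfl | hipos
      · rw [Set.indicator_apply_eq_zero.mpr]
        · simp only [hfdef, Gfun_zero, norm_zero]
        · intro h
          exact absurd rfl (Nat.ne_zero_of_mem_smoothNumbers h)
      · rw [Set.indicator_of_mem]
        rw [Nat.mem_smoothNumbers]
        refine ⟨hipos.ne', fun p hp => ?_⟩
        exact lt_of_le_of_lt (Nat.le_of_mem_primeFactorsList hp) (Finset.mem_range.mp hi)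
    calc ∑ i ∈ Finset.range n, f i
        = ∑ i ∈ Finset.range n, Set.indicator n.smoothNumbers f i :=
          Finset.sum_congr rfl hcongr
      _ ≤ ∑' i : ℕ, Set.indicator n.smoothNumbers f i :=
          Summable.sum_le_tsum _ (fun i _ => Set.indicator_nonneg (fun j _ => hf0 j) i) HS.summable
      _ = _ := HS.tsum_eq
      _ ≤ C := hprod_le n
  exact summable_of_sum_range_le hf0 key
section Local

variable {u v : ℕ} {s : ℂ}

lemma xnorm_lt_one (hs : 0 < s.re) {p : ℕ} (hp : p.Prime) :
    ‖(p : ℂ) ^ (-(1 + s))‖ < 1 := by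
  have h := Complex.norm_natCast_cpow_of_pos hp.pos (-(1 + s))
  rw [h, show (-(1 + s)).re = -(1 + s.re) by simp]
  exact Gfun_r_lt_one hs hp

lemma cast_pow_cpow (p : ℕ) (e : ℕ) (z : ℂ) :
    ((p ^ e : ℕ) : ℂ) ^ z = ((p : ℂ) ^ z) ^ e := by
  push_cast
  rw [← Complex.natCast_cpow_natCast_mul, Complex.cpow_nat_mul]

lemma totient_mul_prime_pow_of_dvd {p : ℕ} (hp : p.Prime) (hpu : p ∣ u) (e : ℕ) :
    Nat.totient (u * p ^ e) = p ^ e * Nat.totient u := by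
  induction e with
  | zero => simp
  | succ e ih =>
    have h1 : u * p ^ (e + 1) = p * (u * p ^ e) := by ring
    rw [h1, Nat.totient_mul_of_prime_of_dvd hp (Dvd.dvd.mul_right hpu _), ih]
    ring

lemma Gfun_pow_eq_of_dvd_u {p : ℕ} (hu : 0 < u) (hp : Nat.Prime p) (hpu : p ∣ u)
    (hpv : ¬ p ∣ v) (e : ℕ) :
    Gfun u v s (p ^ e) = ((p : ℂ) ^ (-(1 + s))) ^ e := by
  have hpe : 0 < p ^ e := pow_pos hp.pos e
  have hcond : 1 ≤ p ^ e ∧ Nat.gcd (p ^ e) v = 1 :=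
    ⟨hpe, Nat.Coprime.pow_left e ((Nat.Prime.coprime_iff_not_dvd hp).mpr hpv)⟩
  have hφu : ((Nat.totient u : ℕ) : ℂ) ≠ 0 := by
    exact_mod_cast (Nat.totient_pos.mpr hu).ne'
  have hpe0 : ((p ^ e : ℕ) : ℂ) ≠ 0 := by exact_mod_cast hpe.ne'
  have hs0 : ((p ^ e : ℕ) : ℂ) ^ s ≠ 0 := by
    simp only [ne_eq, Complex.cpow_eq_zero_iff, not_and_or, not_not]
    left
    exact hpe0
  have hc1 : ((p ^ e * Nat.totient u : ℕ) : ℂ) =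
      ((p ^ e : ℕ) : ℂ) * ((Nat.totient u : ℕ) : ℂ) := by push_cast; ring
  rw [Gfun, if_pos hcond, totient_mul_prime_pow_of_dvd hp hpu, ← cast_pow_cpow,
    show -(1 + s) = (-1) + (-s) by ring, Complex.cpow_add _ _ hpe0,
    Complex.cpow_neg_one, Complex.cpow_neg, hc1]
  push_cast at hpe0 hs0
  field_simp

lemma Gfun_pow_eq_of_not_dvd {p : ℕ} (hu : 0 < u) (hp : Nat.Prime p) (hpu : ¬ p ∣ u)
    (hpv : ¬ p ∣ v) (e : ℕ) :
    Gfun u v s (p ^ (e + 1)) =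
      ((p : ℂ) / ((p : ℂ) - 1)) * ((p : ℂ) ^ (-(1 + s))) ^ (e + 1) := by
  have hpe : 0 < p ^ (e + 1) := pow_pos hp.pos _
  have hcond : 1 ≤ p ^ (e + 1) ∧ Nat.gcd (p ^ (e + 1)) v = 1 :=
    ⟨hpe, Nat.Coprime.pow_left _ ((Nat.Prime.coprime_iff_not_dvd hp).mpr hpv)⟩
  have hcop : Nat.Coprime u (p ^ (e + 1)) :=
    Nat.Coprime.pow_right _ (((Nat.Prime.coprime_iff_not_dvd hp).mpr hpu).symm)
  have htot : Nat.totient (u * p ^ (e + 1)) =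
      Nat.totient u * (p ^ e * (p - 1)) := by
    rw [Nat.totient_mul hcop, Nat.totient_prime_pow hp (Nat.succ_pos e),
      Nat.succ_sub_one]
  have hφu : ((Nat.totient u : ℕ) : ℂ) ≠ 0 := by
    exact_mod_cast (Nat.totient_pos.mpr hu).ne'
  have hpe0 : ((p ^ (e + 1) : ℕ) : ℂ) ≠ 0 := by exact_mod_cast hpe.ne'
  have hs0 : ((p ^ (e + 1) : ℕ) : ℂ) ^ s ≠ 0 := by
    simp only [ne_eq, Complex.cpow_eq_zero_iff, not_and_or, not_not]
    left
    exact hpe0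
  have hpc : ((p : ℕ) : ℂ) ≠ 0 := by exact_mod_cast hp.pos.ne'
  have hZ0 : ((p ^ e : ℕ) : ℂ) ≠ 0 := by
    exact_mod_cast (pow_pos hp.pos e).ne'
  have hq1 : ((p : ℕ) : ℂ) - 1 ≠ 0 := by
    intro h
    have h1 : ((p : ℕ) : ℂ) = 1 := by linear_combination h
    have h2 : (p : ℝ) = 1 := by exact_mod_cast congrArg Complex.re h1
    have : (2 : ℝ) ≤ (p : ℝ) := by exact_mod_cast hp.two_le
    linarith
  have hc2 : ((Nat.totient u * (p ^ e * (p - 1)) : ℕ) : ℂ) =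
      ((Nat.totient u : ℕ) : ℂ) * (((p ^ e : ℕ) : ℂ) * (((p : ℕ) : ℂ) - 1)) := by
    have h2 := hp.two_le
    push_cast [Nat.cast_sub (by omega : 1 ≤ p)]
    ring
  have hc3 : ((p ^ (e + 1) : ℕ) : ℂ) = ((p ^ e : ℕ) : ℂ) * ((p : ℕ) : ℂ) := by
    push_cast; ring
  rw [Gfun, if_pos hcond, htot, ← cast_pow_cpow,
    show -(1 + s) = (-1) + (-s) by ring, Complex.cpow_add _ _ hpe0,
    Complex.cpow_neg_one, Complex.cpow_neg, hc2, hc3]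
  rw [hc3] at hs0
  have hX' : (((p : ℕ) : ℂ) ^ e * ((p : ℕ) : ℂ)) ^ s ≠ 0 := by
    simp only [ne_eq, Complex.cpow_eq_zero_iff, not_and_or, not_not]
    left
    exact mul_ne_zero (pow_ne_zero _ hpc) hpc
  field_simp

end Local
section LocalTsum

variable {u v : ℕ} {s : ℂ}

lemma Gfun_tsum_of_dvd_v {p : ℕ} (hu : 0 < u) (hp : p.Prime) (hpv : p ∣ v) :
    ∑' e : ℕ, Gfun u v s (p ^ e) = 1 := by
  rw [tsum_eq_single 0 ?_]
  · rw [pow_zero, Gfun_one u v s hu]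
  · intro e he
    rw [Gfun, if_neg, mul_zero]
    rintro ⟨-, hg⟩
    have hpg : p ∣ Nat.gcd (p ^ e) v := Nat.dvd_gcd (dvd_pow_self p he) hpv
    rw [hg] at hpg
    exact hp.ne_one (Nat.eq_one_of_dvd_one hpg)

lemma Gfun_tsum_of_dvd_u {p : ℕ} (hu : 0 < u) (hs : 0 < s.re) (hp : p.Prime)
    (hpu : p ∣ u) (hpv : ¬ p ∣ v) :
    ∑' e : ℕ, Gfun u v s (p ^ e) = (1 - (p : ℂ) ^ (-(1 + s)))⁻¹ := by
  rw [tsum_congr (fun e => Gfun_pow_eq_of_dvd_u hu hp hpu hpv e)]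
  exact tsum_geometric_of_norm_lt_one (xnorm_lt_one hs hp)

lemma Gfun_tsum_of_not_dvd {p : ℕ} (hu : 0 < u) (hs : 0 < s.re) (hp : p.Prime)
    (hpu : ¬ p ∣ u) (hpv : ¬ p ∣ v) :
    ∑' e : ℕ, Gfun u v s (p ^ e) =
      1 + ((p : ℂ) / ((p : ℂ) - 1)) *
        ((p : ℂ) ^ (-(1 + s)) * (1 - (p : ℂ) ^ (-(1 + s)))⁻¹) := by
  have hsum : Summable (fun e : ℕ => Gfun u v s (p ^ e)) :=
    (Gfun_local_summable v hu hs hp).of_norm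
  rw [Summable.tsum_eq_zero_add hsum, pow_zero, Gfun_one u v s hu]
  congr 1
  rw [tsum_congr (fun e => Gfun_pow_eq_of_not_dvd hu hp hpu hpv e)]
  rw [tsum_mul_left]
  congr 1
  have hpow : ∀ e : ℕ, ((p : ℂ) ^ (-(1 + s))) ^ (e + 1) =
      (p : ℂ) ^ (-(1 + s)) * ((p : ℂ) ^ (-(1 + s))) ^ e := fun e => by
    rw [pow_succ]; ring
  simp_rw [hpow]
  rw [tsum_mul_left, tsum_geometric_of_norm_lt_one (xnorm_lt_one hs hp)]

end LocalTsum
section Moebius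

open ArithmeticFunction

lemma moebius_hasProd (s : ℂ) (hs : 0 < s.re) :
    ∃ T : ℂ, HasProd (fun p : Nat.Primes => 1 - (p : ℂ) ^ (-(1 + s))) T := by
  have hre : 1 < (1 + s).re := by simp; linarith
  have hz : (1 + s) ≠ 0 := ne_zero_of_one_lt_re hre
  set F : ℕ → ℂ := fun n => ((moebius n : ℤ) : ℂ) * riemannZetaSummandHom hz n with hF
  have hf₁ : F 1 = 1 := by
    simp [hF, moebius_apply_one]
  have hf₀ : F 0 = 0 := by simp [hF]
  have hmul : ∀ {m n : ℕ}, Nat.Coprime m n → F (m * n) = F m * F n := by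
    intro m n h
    simp only [hF, isMultiplicative_moebius.map_mul_of_coprime h, map_mul]
    push_cast
    ring
  have hsum : Summable fun n => ‖F n‖ := by
    apply Summable.of_nonneg_of_le (fun _ => norm_nonneg _) _
      (summable_riemannZetaSummand hre)
    intro n
    rw [hF, norm_mul]
    have h1 : ‖((moebius n : ℤ) : ℂ)‖ ≤ 1 := by
      rw [Complex.norm_intCast]
      have := abs_moebius_le_one (n := n)
      exact_mod_cast this
    calc ‖((moebius n : ℤ) : ℂ)‖ * ‖riemannZetaSummandHom hz n‖
        ≤ 1 * ‖riemannZetaSummandHom hz n‖ :=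
          mul_le_mul_of_nonneg_right h1 (norm_nonneg _)
      _ = _ := one_mul _
  have hprod := EulerProduct.eulerProduct_hasProd hf₁ hmul hsum hf₀
  refine ⟨∑' n, F n, ?_⟩
  convert hprod using 2 with p
  have hloc : ∀ e : ℕ, e ∉ ({0, 1} : Finset ℕ) → F ((p : ℕ) ^ e) = 0 := by
    intro e he
    simp only [Finset.mem_insert, Finset.mem_singleton] at he
    push_neg at he
    rw [hF]
    have : moebius ((p : ℕ) ^ e) = 0 := by
      rw [moebius_apply_prime_pow p.prop he.1, if_neg he.2]
    simp [this]
  rw [tsum_eq_sum hloc]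
  rw [Finset.sum_insert (by norm_num), Finset.sum_singleton]
  rw [pow_zero, hf₁, pow_one]
  have hμp : moebius (p : ℕ) = -1 := moebius_apply_prime p.prop
  have hval : riemannZetaSummandHom hz (p : ℕ) = (p : ℂ) ^ (-(1 + s)) := rfl
  rw [hF]
  simp only [hμp, hval]
  push_cast
  ring

end Moebius
lemma prime_cast_sub_one_ne_zero {p : ℕ} (hp : p.Prime) : ((p : ℕ) : ℂ) - 1 ≠ 0 := by
  intro h
  have h1 : ((p : ℕ) : ℂ) = 1 := by linear_combination h
  have h2 : (p : ℝ) = 1 := by exact_mod_cast congrArg Complex.re h1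
  have : (2 : ℝ) ≤ (p : ℝ) := by exact_mod_cast hp.two_le
  linarith

lemma one_sub_x_ne_zero {s : ℂ} (hs : 0 < s.re) {p : ℕ} (hp : p.Prime) :
    1 - (p : ℂ) ^ (-(1 + s)) ≠ 0 := by
  intro h
  have h1 : (p : ℂ) ^ (-(1 + s)) = 1 := by linear_combination -h
  have := xnorm_lt_one hs hp
  rw [h1, norm_one] at this
  exact lt_irrefl _ this

theorem statement10 (u v : ℕ) (hu : 0 < u) (hv : 0 < v) (huv : Nat.gcd u v = 1)
    (s : ℂ) (hs : 0 < s.re) :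
    Summable (fun ℓ : ℕ =>
      ‖if 1 ≤ ℓ ∧ Nat.gcd ℓ v = 1 then
          1 / ((Nat.totient (u * ℓ) : ℂ) * (ℓ : ℂ) ^ s) else 0‖) ∧
    (∑' ℓ : ℕ, if 1 ≤ ℓ ∧ Nat.gcd ℓ v = 1 then
        1 / ((Nat.totient (u * ℓ) : ℂ) * (ℓ : ℂ) ^ s) else 0) =
      (1 / (Nat.totient u : ℂ)) * riemannZeta (1 + s) * Rfun s u v := by
  have hφupos : 0 < Nat.totient u := Nat.totient_pos.mpr hu
  have hφuR : (0 : ℝ) < (Nat.totient u : ℝ) := by exact_mod_cast hφupos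
  have hφu : ((Nat.totient u : ℕ) : ℂ) ≠ 0 := by exact_mod_cast hφupos.ne'
  have hre : 1 < (1 + s).re := by simp; linarith
  set F : ℕ → ℂ := fun ℓ => if 1 ≤ ℓ ∧ Nat.gcd ℓ v = 1 then
      1 / ((Nat.totient (u * ℓ) : ℂ) * (ℓ : ℂ) ^ s) else 0 with hFdef
  have hGF : ∀ ℓ, Gfun u v s ℓ = (Nat.totient u : ℂ) * F ℓ := fun ℓ => rfl
  have hsumG := Gfun_summable_norm (v := v) hu hs
  have hsumF : Summable (fun ℓ : ℕ => ‖F ℓ‖) := by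
    have heq : (fun ℓ : ℕ => ‖F ℓ‖) =
        fun ℓ => ((Nat.totient u : ℝ))⁻¹ * ‖Gfun u v s ℓ‖ := by
      funext ℓ
      rw [hGF, norm_mul, Complex.norm_natCast]
      field_simp
    rw [heq]
    exact hsumG.mul_left _
  refine ⟨hsumF, ?_⟩
  -- notation
  have hq0 : ∀ p : Nat.Primes, ((p : ℕ) : ℂ) ≠ 0 := fun p => by
    exact_mod_cast p.prop.pos.ne'
  have hxp : ∀ p : Nat.Primes,
      ((p : ℕ) : ℂ) ^ (-(1 + s)) * ((p : ℕ) : ℂ) ^ (s + 1) = 1 := fun p => by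
    rw [← Complex.cpow_add _ _ (hq0 p), show -(1 + s) + (s + 1) = 0 by ring,
      Complex.cpow_zero]
  have hps : ∀ p : Nat.Primes, ((p : ℕ) : ℂ) ^ (s + 1) ≠ 0 := fun p => by
    intro h
    have := hxp p
    rw [h, mul_zero] at this
    exact zero_ne_one this
  -- the Euler factors
  set E : Nat.Primes → ℂ := fun p => ∑' e : ℕ, Gfun u v s ((p : ℕ) ^ e) with hEdef
  set Z : Nat.Primes → ℂ := fun p => (1 - ((p : ℕ) : ℂ) ^ (-(1 + s)))⁻¹ with hZdef
  set A : Nat.Primes → ℂ := fun p =>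
    if (p : ℕ) ∣ v then 1 - ((p : ℕ) : ℂ) ^ (-(1 + s)) else 1 with hAdef
  set A' : Nat.Primes → ℂ := fun p =>
    if (p : ℕ) ∣ v then (1 - ((p : ℕ) : ℂ) ^ (-(1 + s)))⁻¹ else 1 with hA'def
  set M : Nat.Primes → ℂ := fun p => 1 - ((p : ℕ) : ℂ) ^ (-(1 + s)) with hMdef
  set B : Nat.Primes → ℂ := fun p => if (p : ℕ) ∣ u * v then 1 else
      (1 + 1 / (((p : ℕ) : ℂ) ^ (s + 1) * (((p : ℕ) : ℂ) - 1))) with hBdef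
  have hnotboth : ∀ p : Nat.Primes, (p : ℕ) ∣ u → (p : ℕ) ∣ v → False := by
    intro p h1 h2
    have : (p : ℕ) ∣ Nat.gcd u v := Nat.dvd_gcd h1 h2
    rw [huv] at this
    exact p.prop.ne_one (Nat.eq_one_of_dvd_one this)
  -- key per-prime identity
  have key : ∀ p : Nat.Primes, E p = Z p * (A p * B p) := by
    intro p
    have hx1 := one_sub_x_ne_zero hs p.prop
    have hp1 := prime_cast_sub_one_ne_zero p.prop
    by_cases hpv : (p : ℕ) ∣ v
    · have hBval : B p = 1 := by
        rw [hBdef]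
        simp only
        rw [if_pos (Dvd.dvd.mul_left hpv u)]
      rw [hEdef, hZdef, hAdef, hBval]
      simp only
      rw [if_pos hpv, Gfun_tsum_of_dvd_v hu p.prop hpv, mul_one,
        inv_mul_cancel₀ hx1]
    · by_cases hpu : (p : ℕ) ∣ u
      · have hBval : B p = 1 := by
          rw [hBdef]
          simp only
          rw [if_pos (Dvd.dvd.mul_right hpu v)]
        rw [hEdef, hZdef, hAdef, hBval]
        simp only
        rw [if_neg hpv, Gfun_tsum_of_dvd_u hu hs p.prop hpu hpv]
        ring
      · have hpuv : ¬ (p : ℕ) ∣ u * v := by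
          intro h
          rcases (Nat.Prime.dvd_mul p.prop).mp h with h | h
          exacts [hpu h, hpv h]
        rw [hEdef, hZdef, hAdef, hBdef]
        simp only
        rw [if_neg hpv, if_neg hpuv, Gfun_tsum_of_not_dvd hu hs p.prop hpu hpv]
        have hxy := hxp p
        have hy := hps p
        have hxval : ((p : ℕ) : ℂ) ^ (-(1 + s)) = (((p : ℕ) : ℂ) ^ (s + 1))⁻¹ :=
          eq_inv_of_mul_eq_one_left hxy
        rw [hxval]
        rw [hxval] at hx1
        field_simp
        field_simp at hx1
        have hX1 : ((p : ℕ) : ℂ) ^ (s + 1) - 1 ≠ 0 := by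
          intro h
          apply hx1
          rw [h, zero_div]
        rw [eq_div_iff hX1, add_mul, div_mul_cancel₀ _ hX1]
        ring
  -- HasProd facts
  have hE : HasProd E (∑' n, Gfun u v s n) :=
    EulerProduct.eulerProduct_hasProd (Gfun_one u v s hu)
      (fun {m n} h => Gfun_mul u v s hu h) hsumG (Gfun_zero u v s)
  have hZprod : HasProd Z (riemannZeta (1 + s)) := riemannZeta_eulerProduct_hasProd hre
  obtain ⟨T, hMprod⟩ := moebius_hasProd s hs
  set S : Finset Nat.Primes := v.primeFactors.subtype Nat.Prime with hSdef
  have hmemS : ∀ q : Nat.Primes, q ∈ S ↔ (q : ℕ) ∣ v := by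
    intro q
    rw [hSdef]
    refine (Finset.mem_subtype (p := Nat.Prime) (a := q)).trans ?_
    rw [Nat.mem_primeFactors]
    constructor
    · rintro ⟨-, h, -⟩; exact h
    · intro h; exact ⟨q.prop, h, hv.ne'⟩
  have hAprod : HasProd A (∏ q ∈ S, A q) := by
    apply hasProd_prod_of_ne_finset_one (f := A) (s := S)
    intro q hq
    rw [hAdef]
    simp only
    rw [if_neg (fun hd => hq ((hmemS q).mpr hd))]
  have hA'prod : HasProd A' (∏ q ∈ S, A' q) := by
    apply hasProd_prod_of_ne_finset_one (f := A') (s := S)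
    intro q hq
    rw [hA'def]
    simp only
    rw [if_neg (fun hd => hq ((hmemS q).mpr hd))]
  have hAval : ∏ q ∈ S, A q = ∏ p ∈ v.primeFactors, (1 - (p : ℂ) ^ (-s - 1)) := by
    have h1 : ∀ q ∈ S, A q = 1 - ((q : ℕ) : ℂ) ^ (-s - 1) := by
      intro q hq
      rw [hAdef]
      simp only
      rw [if_pos ((hmemS q).mp hq), show -(1 + s) = -s - 1 by ring]
    rw [Finset.prod_congr rfl h1, hSdef]
    exact Finset.prod_subtype_of_mem (s := v.primeFactors) (p := Nat.Prime)
      (fun k => 1 - (k : ℂ) ^ (-s - 1))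
      (fun x hx => Nat.prime_of_mem_primeFactors hx)
  have hZM : ∀ p : Nat.Primes, Z p * M p = 1 := fun p =>
    inv_mul_cancel₀ (one_sub_x_ne_zero hs p.prop)
  have hAA' : ∀ p : Nat.Primes, A p * A' p = 1 := by
    intro p
    rw [hAdef, hA'def]
    simp only
    split_ifs with h
    · exact mul_inv_cancel₀ (one_sub_x_ne_zero hs p.prop)
    · exact one_mul 1
  have hBeq : B = fun p => E p * (M p * A' p) := by
    funext p
    calc B p = (Z p * M p) * (A p * A' p) * B p := by rw [hZM p, hAA' p]; ring
      _ = E p * (M p * A' p) := by rw [key p]; ring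
  have hBmult : Multipliable B := by
    rw [hBeq]
    exact hE.multipliable.mul (hMprod.multipliable.mul hA'prod.multipliable)
  have hfinal : HasProd E (riemannZeta (1 + s) * ((∏ q ∈ S, A q) * ∏' p, B p)) := by
    have h := hZprod.mul (hAprod.mul hBmult.hasProd)
    have heq : (fun p => Z p * (A p * B p)) = E := funext fun p => (key p).symm
    rwa [heq] at h
  have htsumG : (∑' n, Gfun u v s n) =
      riemannZeta (1 + s) * ((∏ q ∈ S, A q) * ∏' p, B p) := hE.unique hfinal
  have hFG : ∀ ℓ, F ℓ = ((Nat.totient u : ℕ) : ℂ)⁻¹ * Gfun u v s ℓ := by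
    intro ℓ
    rw [hGF ℓ]
    field_simp
  calc (∑' ℓ, F ℓ) = ∑' ℓ, ((Nat.totient u : ℕ) : ℂ)⁻¹ * Gfun u v s ℓ := tsum_congr hFG
    _ = ((Nat.totient u : ℕ) : ℂ)⁻¹ * ∑' n, Gfun u v s n := tsum_mul_left
    _ = (1 / (Nat.totient u : ℂ)) * riemannZeta (1 + s) * Rfun s u v := by
        rw [htsumG, hAval, Rfun, hBdef]
        ring
end

section
/- Let N be a positive integer and let γ ∈ ℂ with 0 < Re γ < 2. Then the series Σ_{c ≥ 1, gcd(c,N)=1} μ(c) · c^{−1−γ} · ∏_{p ∤ cN} (1 − 2p^{−2} + p^{−3}) · ∏_{p | c} (1 − 2p^{−1} + p^{−3} + p^{γ−2} − p^{γ−3}) converges absolutely and equals P(N; 1, γ) = ∏_{p ∤ N} ( 1 − p^{−1−γ} − 2p^{−2} + 2p^{−2−γ} + p^{−4} − p^{−4−γ} ), the products over primes being absolutely convergent. -/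
open Complex
open scoped Classical

/-- `P(n;w,s) = ∏_{p∤n}(1 − p^{−s−w} − 2p^{−1−w} + 2p^{−1−s−w} + p^{−2−2w} − p^{−2−2w−s})`. -/
noncomputable def Pprod (n : ℕ) (w s : ℂ) : ℂ :=
  ∏' p : Nat.Primes, if (p : ℕ) ∣ n then 1 else
    (1 - ((p : ℕ) : ℂ) ^ (-s - w) - 2 * ((p : ℕ) : ℂ) ^ (-1 - w)
      + 2 * ((p : ℕ) : ℂ) ^ (-1 - s - w) + ((p : ℕ) : ℂ) ^ (-2 - 2 * w)
      - ((p : ℕ) : ℂ) ^ (-2 - 2 * w - s))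

/-- The `c`-th term of the series: nonzero only for `c ≥ 1` coprime to `N`, where it is
`μ(c) c^{−1−γ} ∏_{p∤cN}(1−2p^{−2}+p^{−3}) ∏_{p|c}(1−2p^{−1}+p^{−3}+p^{γ−2}−p^{γ−3})`. -/
noncomputable def Cterm (N : ℕ) (γ : ℂ) (c : ℕ) : ℂ :=
  if 1 ≤ c ∧ Nat.gcd c N = 1 then
    ((ArithmeticFunction.moebius c : ℤ) : ℂ) * (c : ℂ) ^ (-1 - γ) *
      (∏' p : Nat.Primes, if (p : ℕ) ∣ c * N then 1 else
        (1 - 2 * ((p : ℕ) : ℂ) ^ (-2 : ℂ) + ((p : ℕ) : ℂ) ^ (-3 : ℂ))) *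
      (∏ p ∈ c.primeFactors,
        (1 - 2 * (p : ℂ) ^ (-1 : ℂ) + (p : ℂ) ^ (-3 : ℂ) + (p : ℂ) ^ (γ - 2) -
          (p : ℂ) ^ (γ - 3)))
  else 0

noncomputable def fC (p : ℕ) : ℂ := 1 - 2 * (p : ℂ) ^ (-2 : ℂ) + (p : ℂ) ^ (-3 : ℂ)

noncomputable def gC (γ : ℂ) (p : ℕ) : ℂ :=
  1 - 2 * (p : ℂ) ^ (-1 : ℂ) + (p : ℂ) ^ (-3 : ℂ) + (p : ℂ) ^ (γ - 2) - (p : ℂ) ^ (γ - 3)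

noncomputable def fR (p : ℕ) : ℝ := 1 - 2 * (p : ℝ) ^ (-2 : ℝ) + (p : ℝ) ^ (-3 : ℝ)

lemma fC_eq_fR (p : ℕ) : fC p = ((fR p : ℝ) : ℂ) := by
  have h0 : (0:ℝ) ≤ (p : ℝ) := Nat.cast_nonneg p
  unfold fC fR
  push_cast
  rw [Complex.ofReal_cpow h0, Complex.ofReal_cpow h0]
  norm_num

lemma fR_ge (p : ℕ) (hp : 2 ≤ p) : 1/2 ≤ fR p := by
  have h2 : (2:ℝ) ≤ (p:ℝ) := by exact_mod_cast hp
  have h1 : (p:ℝ) ^ (-2 : ℝ) ≤ (2:ℝ) ^ (-2:ℝ) :=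
    Real.rpow_le_rpow_of_nonpos (by norm_num) h2 (by norm_num)
  have h3 : (0:ℝ) ≤ (p:ℝ) ^ (-3 : ℝ) := Real.rpow_nonneg (by linarith) _
  have : (2:ℝ) ^ (-2:ℝ) = 1/4 := by
    rw [show (-2:ℝ) = ((-2 : ℤ) : ℝ) by norm_num, Real.rpow_intCast]; norm_num
  unfold fR; rw [this] at h1; linarith

lemma fC_ne (p : ℕ) (hp : 2 ≤ p) : fC p ≠ 0 := by
  rw [fC_eq_fR]
  have := fR_ge p hp
  exact_mod_cast (by intro h; rw [h] at this; norm_num at this : (fR p : ℝ) ≠ 0)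

lemma norm_fC_ge (p : ℕ) (hp : 2 ≤ p) : 1/2 ≤ ‖fC p‖ := by
  rw [fC_eq_fR, Complex.norm_real]
  calc (1:ℝ)/2 ≤ fR p := fR_ge p hp
    _ ≤ |fR p| := le_abs_self _
    _ = ‖fR p‖ := (Real.norm_eq_abs _).symm

lemma norm_fC_sub_one (p : ℕ) (hp : 2 ≤ p) : ‖fC p - 1‖ ≤ 3 * (p:ℝ) ^ (-2 : ℝ) := by
  have hp1 : (1:ℝ) ≤ (p:ℝ) := by exact_mod_cast Nat.one_le_of_lt hp
  have h1 : ‖(p:ℂ) ^ (-2:ℂ)‖ = (p:ℝ) ^ (-2:ℝ) := by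
    rw [Complex.norm_natCast_cpow_of_pos (by omega)]; norm_num
  have h2 : ‖(p:ℂ) ^ (-3:ℂ)‖ = (p:ℝ) ^ (-3:ℝ) := by
    rw [Complex.norm_natCast_cpow_of_pos (by omega)]; norm_num
  have h3 : (p:ℝ) ^ (-3:ℝ) ≤ (p:ℝ) ^ (-2:ℝ) :=
    Real.rpow_le_rpow_of_exponent_le hp1 (by norm_num)
  calc ‖fC p - 1‖ = ‖-(2 * (p:ℂ) ^ (-2:ℂ)) + (p:ℂ) ^ (-3:ℂ)‖ := by unfold fC; ring_nf
    _ ≤ ‖-(2 * (p:ℂ) ^ (-2:ℂ))‖ + ‖(p:ℂ) ^ (-3:ℂ)‖ := norm_add_le _ _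
    _ = 2 * (p:ℝ) ^ (-2:ℝ) + (p:ℝ) ^ (-3:ℝ) := by
        rw [norm_neg, norm_mul, h1, h2]; norm_num
    _ ≤ 3 * (p:ℝ) ^ (-2:ℝ) := by linarith

lemma norm_gC_le (γ : ℂ) (h2 : γ.re < 2) (p : ℕ) (hp : 2 ≤ p) : ‖gC γ p‖ ≤ 6 := by
  have hp0 : 0 < p := by omega
  have hp1 : (1:ℝ) ≤ (p:ℝ) := by exact_mod_cast Nat.one_le_of_lt hp
  have key : ∀ s : ℂ, s.re ≤ 0 → ‖(p:ℂ) ^ s‖ ≤ 1 := fun s hs => by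
    rw [Complex.norm_natCast_cpow_of_pos hp0]
    exact Real.rpow_le_one_of_one_le_of_nonpos hp1 hs
  have k1 := key (-1) (by norm_num)
  have k3 := key (-3) (by norm_num)
  have k4 := key (γ - 2) (by simp [Complex.sub_re]; linarith)
  have k5 := key (γ - 3) (by simp [Complex.sub_re]; linarith)
  unfold gC
  calc ‖1 - 2 * (p:ℂ) ^ (-1:ℂ) + (p:ℂ) ^ (-3:ℂ) + (p:ℂ) ^ (γ-2) - (p:ℂ) ^ (γ-3)‖
      ≤ ‖1 - 2 * (p:ℂ) ^ (-1:ℂ) + (p:ℂ) ^ (-3:ℂ) + (p:ℂ) ^ (γ-2)‖ + ‖(p:ℂ) ^ (γ-3)‖ :=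
        norm_sub_le _ _
    _ ≤ (‖1 - 2 * (p:ℂ) ^ (-1:ℂ) + (p:ℂ) ^ (-3:ℂ)‖ + ‖(p:ℂ) ^ (γ-2)‖) + ‖(p:ℂ) ^ (γ-3)‖ := by
        gcongr; exact norm_add_le _ _
    _ ≤ ((‖1 - 2 * (p:ℂ) ^ (-1:ℂ)‖ + ‖(p:ℂ) ^ (-3:ℂ)‖) + ‖(p:ℂ) ^ (γ-2)‖) + ‖(p:ℂ) ^ (γ-3)‖ := by
        gcongr; exact norm_add_le _ _
    _ ≤ (((‖(1:ℂ)‖ + ‖2 * (p:ℂ) ^ (-1:ℂ)‖) + ‖(p:ℂ) ^ (-3:ℂ)‖) + ‖(p:ℂ) ^ (γ-2)‖) + ‖(p:ℂ) ^ (γ-3)‖ := by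
        gcongr; exact norm_sub_le _ _
    _ ≤ 6 := by
        rw [norm_mul, norm_one]
        have : ‖(2:ℂ)‖ = 2 := by norm_num
        rw [this]; linarith
-- general: nonvanishing + summable (f - 1) → multipliable
lemma multipliable_of_summable_sub_one {ι : Type*} {f : ι → ℂ} (h0 : ∀ i, f i ≠ 0)
    (hs : Summable fun i => f i - 1) : Multipliable f := by
  apply Complex.multipliable_of_summable_log
  have := hs.neg.clog_one_sub
  refine this.congr fun i => ?_
  congr 1
  ring

-- summability over primes of ‖fC - 1‖-type bounds
lemma summable_primes_rpow {r : ℝ} (hr : r < -1) :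
    Summable fun p : Nat.Primes => ((p:ℕ):ℝ) ^ r :=
  (Real.summable_nat_rpow.mpr hr).subtype _

lemma mult_v (m : ℕ) :
    Multipliable fun p : Nat.Primes => if (p:ℕ) ∣ m then (1:ℂ) else fC p := by
  apply multipliable_of_summable_sub_one
  · intro p
    by_cases h : (p:ℕ) ∣ m <;> simp [h, fC_ne _ p.2.two_le]
  · apply Summable.of_norm
    have hs : Summable fun p : Nat.Primes => 3 * ((p:ℕ):ℝ) ^ (-2:ℝ) :=
      (summable_primes_rpow (by norm_num)).mul_left 3
    refine hs.of_nonneg_of_le (fun _ => norm_nonneg _) fun p => ?_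
    by_cases h : (p:ℕ) ∣ m
    · simp only [h, if_true, sub_self, norm_zero]
      positivity
    · simp only [h, if_false]
      exact norm_fC_sub_one _ p.2.two_le

lemma tprod_w (c : ℕ) (hc : c ≠ 0) :
    HasProd (fun p : Nat.Primes => if (p:ℕ) ∣ c then fC p else (1:ℂ))
      (∏ p ∈ c.primeFactors, fC p) := by
  classical
  have h := hasProd_prod_of_ne_finset_one (L := SummationFilter.unconditional Nat.Primes)
    (s := (c.primeFactors.subtype Nat.Prime : Finset Nat.Primes))
    (f := fun p : Nat.Primes => if (p:ℕ) ∣ c then fC p else (1:ℂ)) ?_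
  · convert h using 1
    refine (Finset.prod_bij (fun (b : Nat.Primes) (_ : b ∈ Finset.subtype Nat.Prime c.primeFactors) => (b:ℕ)) ?_ ?_ ?_ ?_).symm
    · intro b hb; exact (Finset.mem_subtype.mp hb)
    · intro b₁ _ b₂ _ hb; exact Subtype.ext hb
    · intro q hq; exact ⟨⟨q, Nat.prime_of_mem_primeFactors hq⟩, Finset.mem_subtype.mpr hq, rfl⟩
    · intro b hb
      have := Finset.mem_subtype.mp hb
      simp [Nat.dvd_of_mem_primeFactors this]
  · intro p hp
    have hnm : (p:ℕ) ∉ c.primeFactors := fun hmem => hp (Finset.mem_subtype.mpr hmem)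
    rw [Nat.mem_primeFactors] at hnm
    push_neg at hnm
    show (if (p:ℕ) ∣ c then fC (p:ℕ) else 1) = 1
    by_cases hd : (p:ℕ) ∣ c
    · exact absurd (hnm p.2 hd) hc
    · simp [hd]

lemma split_prod (N c : ℕ) (hc : c ≠ 0) (hcop : Nat.Coprime c N) :
    (∏' p : Nat.Primes, if (p:ℕ) ∣ c * N then (1:ℂ) else fC p) * ∏ p ∈ c.primeFactors, fC p
      = ∏' p : Nat.Primes, if (p:ℕ) ∣ N then (1:ℂ) else fC p := by
  rw [← (tprod_w c hc).tprod_eq, ← Multipliable.tprod_mul (mult_v (c*N)) (tprod_w c hc).multipliable]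
  refine tprod_congr fun p => ?_
  have hpp := p.2
  by_cases hdc : (p:ℕ) ∣ c
  · have hdcN : (p:ℕ) ∣ c * N := hdc.mul_right N
    have hdN : ¬ (p:ℕ) ∣ N := fun h => hpp.one_lt.ne' (Nat.eq_one_of_dvd_coprimes hcop hdc h)
    simp [hdc, hdcN, hdN]
  · by_cases hdN : (p:ℕ) ∣ N
    · simp [hdc, hdN, hdN.mul_left c]
    · have : ¬ (p:ℕ) ∣ c * N := fun h => (hpp.dvd_mul.mp h).elim hdc hdN
      simp [hdc, hdN, this]

noncomputable def Ffun (N : ℕ) (γ : ℂ) (c : ℕ) : ℂ :=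
  if c ≠ 0 ∧ Nat.Coprime c N then
    ((ArithmeticFunction.moebius c : ℤ) : ℂ) * (c : ℂ) ^ (-1 - γ) *
      ∏ p ∈ c.primeFactors, (gC γ p / fC p)
  else 0

lemma Cterm_eq (N : ℕ) (γ : ℂ) (c : ℕ) :
    Cterm N γ c = (∏' p : Nat.Primes, if (p:ℕ) ∣ N then (1:ℂ) else fC p) * Ffun N γ c := by
  by_cases h : c ≠ 0 ∧ Nat.Coprime c N
  · have h1 : 1 ≤ c ∧ Nat.gcd c N = 1 := ⟨Nat.one_le_iff_ne_zero.mpr h.1, h.2⟩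
    rw [Cterm, Ffun, if_pos h1, if_pos h]
    rw [← split_prod N c h.1 h.2]
    have hT : (∏' p : Nat.Primes, if (p : ℕ) ∣ c * N then (1:ℂ) else
        (1 - 2 * ((p : ℕ) : ℂ) ^ (-2 : ℂ) + ((p : ℕ) : ℂ) ^ (-3 : ℂ)))
        = ∏' p : Nat.Primes, if (p:ℕ) ∣ c * N then (1:ℂ) else fC p := rfl
    have hG : (∏ p ∈ c.primeFactors,
        (1 - 2 * (p : ℂ) ^ (-1 : ℂ) + (p : ℂ) ^ (-3 : ℂ) + (p : ℂ) ^ (γ - 2) -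
          (p : ℂ) ^ (γ - 3))) = ∏ p ∈ c.primeFactors, gC γ p := rfl
    rw [hT, hG]
    have hfg : ∏ p ∈ c.primeFactors, gC γ p
        = (∏ p ∈ c.primeFactors, fC p) * ∏ p ∈ c.primeFactors, (gC γ p / fC p) := by
      rw [← Finset.prod_mul_distrib]
      exact Finset.prod_congr rfl fun p hp => by
        rw [mul_div_cancel₀ _ (fC_ne p (Nat.prime_of_mem_primeFactors hp).two_le)]
    rw [hfg]; ring
  · have h1 : ¬ (1 ≤ c ∧ Nat.gcd c N = 1) := by
      rw [not_and_or] at h ⊢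
      rcases h with h | h
      · exact Or.inl (by omega)
      · exact Or.inr h
    rw [Cterm, Ffun, if_neg h1, if_neg h, mul_zero]

lemma Ffun_zero (N : ℕ) (γ : ℂ) : Ffun N γ 0 = 0 := by simp [Ffun]

lemma Ffun_one (N : ℕ) (γ : ℂ) : Ffun N γ 1 = 1 := by
  rw [Ffun, if_pos ⟨one_ne_zero, Nat.coprime_one_left N⟩]
  simp

lemma Ffun_mul (N : ℕ) (γ : ℂ) {m n : ℕ} (hmn : Nat.Coprime m n) :
    Ffun N γ (m * n) = Ffun N γ m * Ffun N γ n := by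
  by_cases hm : m = 0
  · subst hm; simp [Ffun_zero, Ffun, hmn]
  by_cases hn : n = 0
  · subst hn; simp [Ffun]
  by_cases hcm : Nat.Coprime m N
  · by_cases hcn : Nat.Coprime n N
    · have hc : Nat.Coprime (m * n) N := Nat.Coprime.mul hcm hcn
      rw [Ffun, Ffun, Ffun, if_pos ⟨mul_ne_zero hm hn, hc⟩, if_pos ⟨hm, hcm⟩, if_pos ⟨hn, hcn⟩]
      have hμ : (ArithmeticFunction.moebius (m * n) : ℤ)
          = ArithmeticFunction.moebius m * ArithmeticFunction.moebius n :=
        ArithmeticFunction.isMultiplicative_moebius.map_mul_of_coprime hmn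
      have hpow : ((m * n : ℕ) : ℂ) ^ (-1 - γ) = (m:ℂ) ^ (-1 - γ) * (n:ℂ) ^ (-1 - γ) := by
        push_cast
        rw [← Complex.ofReal_natCast m, ← Complex.ofReal_natCast n,
          mul_cpow_ofReal_nonneg (Nat.cast_nonneg m) (Nat.cast_nonneg n)]
      have hpf : (m * n).primeFactors = m.primeFactors ∪ n.primeFactors :=
        Nat.primeFactors_mul hm hn
      have hdisj : Disjoint m.primeFactors n.primeFactors :=
        Nat.Coprime.disjoint_primeFactors hmn
      rw [hμ, hpow, hpf, Finset.prod_union hdisj]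
      push_cast
      ring
    · have hc : ¬ Nat.Coprime (m * n) N := fun h => hcn (Nat.Coprime.coprime_dvd_left (dvd_mul_left n m) h)
      have h1 : Ffun N γ (m * n) = 0 := by rw [Ffun, if_neg (fun h => hc h.2)]
      have h2 : Ffun N γ n = 0 := by rw [Ffun, if_neg (fun h => hcn h.2)]
      rw [h1, h2, mul_zero]
  · have hc : ¬ Nat.Coprime (m * n) N := fun h => hcm (Nat.Coprime.coprime_dvd_left (dvd_mul_right m n) h)
    have h1 : Ffun N γ (m * n) = 0 := by rw [Ffun, if_neg (fun h => hc h.2)]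
    have h2 : Ffun N γ m = 0 := by rw [Ffun, if_neg (fun h => hcm h.2)]
    rw [h1, h2, zero_mul]

lemma norm_Ffun_le (N : ℕ) (γ : ℂ) (h2 : γ.re < 2) (c : ℕ) (hc : c ≠ 0) :
    ‖Ffun N γ c‖ ≤ (c:ℝ) ^ (-1 - γ.re) * ∏ _p ∈ c.primeFactors, (12:ℝ) := by
  have hcpos : 0 < c := Nat.pos_of_ne_zero hc
  have hR : (0:ℝ) ≤ (c:ℝ) ^ (-1 - γ.re) * ∏ _p ∈ c.primeFactors, (12:ℝ) := by
    apply mul_nonneg (Real.rpow_nonneg (Nat.cast_nonneg c) _)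
    exact Finset.prod_nonneg fun _ _ => by norm_num
  by_cases h : c ≠ 0 ∧ Nat.Coprime c N
  · rw [Ffun, if_pos h]
    have hμ : ‖((ArithmeticFunction.moebius c : ℤ) : ℂ)‖ ≤ 1 := by
      rw [Complex.norm_intCast]
      exact_mod_cast ArithmeticFunction.abs_moebius_le_one
    have hcp : ‖(c:ℂ) ^ (-1 - γ)‖ = (c:ℝ) ^ (-1 - γ.re) := by
      rw [Complex.norm_natCast_cpow_of_pos hcpos]
      norm_num [Complex.sub_re]
    have hprod : ‖∏ p ∈ c.primeFactors, (gC γ p / fC p)‖ ≤ ∏ _p ∈ c.primeFactors, (12:ℝ) := by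
      rw [norm_prod]
      refine Finset.prod_le_prod (fun _ _ => norm_nonneg _) ?_
      intro p hp
      have hpp := (Nat.prime_of_mem_primeFactors hp).two_le
      rw [norm_div]
      rw [div_le_iff₀ (lt_of_lt_of_le (by norm_num) (norm_fC_ge p hpp))]
      calc ‖gC γ p‖ ≤ 6 := norm_gC_le γ h2 p hpp
        _ = 12 * (1/2) := by norm_num
        _ ≤ 12 * ‖fC p‖ := by
            have := norm_fC_ge p hpp
            nlinarith [norm_fC_ge p hpp]
    calc ‖_ * _ * _‖ = ‖((ArithmeticFunction.moebius c : ℤ) : ℂ)‖ * ‖(c:ℂ) ^ (-1 - γ)‖ *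
          ‖∏ p ∈ c.primeFactors, (gC γ p / fC p)‖ := by rw [norm_mul, norm_mul]
      _ ≤ 1 * ((c:ℝ) ^ (-1 - γ.re)) * ∏ _p ∈ c.primeFactors, (12:ℝ) := by
          rw [hcp]
          apply mul_le_mul (mul_le_mul_of_nonneg_right hμ (by positivity)) hprod
            (norm_nonneg _) (by positivity)
      _ = (c:ℝ) ^ (-1 - γ.re) * ∏ _p ∈ c.primeFactors, (12:ℝ) := by ring
  · rw [Ffun, if_neg h, norm_zero]; exact hR

lemma prod_twelve_le (δ : ℝ) (hδ : 0 < δ) (c : ℕ) (hc : c ≠ 0) :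
    (∏ _p ∈ c.primeFactors, (12:ℝ)) ≤
      12 ^ (⌈(12:ℝ) ^ (2/δ)⌉₊) * (c:ℝ) ^ (δ/2) := by
  classical
  set P : ℕ := ⌈(12:ℝ) ^ (2/δ)⌉₊ with hP
  have hsplit := Finset.prod_filter_mul_prod_filter_not c.primeFactors (fun p => p < P)
    (fun _ => (12:ℝ))
  rw [← hsplit]
  have h1 : (∏ _p ∈ c.primeFactors.filter (fun p => p < P), (12:ℝ)) ≤ 12 ^ P := by
    rw [Finset.prod_const]
    apply pow_le_pow_right₀ (by norm_num)
    calc (c.primeFactors.filter (fun p => p < P)).card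
        ≤ (Finset.range P).card := Finset.card_le_card (fun x hx => by
          simp only [Finset.mem_filter] at hx
          exact Finset.mem_range.mpr hx.2)
      _ = P := Finset.card_range P
  have h2 : (∏ _p ∈ c.primeFactors.filter (fun p => ¬ p < P), (12:ℝ))
      ≤ (c:ℝ) ^ (δ/2) := by
    set s := c.primeFactors.filter (fun p => ¬ p < P) with hs
    have hbd : ∀ p ∈ s, (12:ℝ) ≤ (p:ℝ) ^ (δ/2) := by
      intro p hp
      simp only [hs, Finset.mem_filter, not_lt] at hp
      have hpge : (12:ℝ) ^ (2/δ) ≤ (p:ℝ) := le_trans (Nat.le_ceil _) (by exact_mod_cast hp.2)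
      calc (12:ℝ) = ((12:ℝ) ^ (2/δ)) ^ (δ/2) := by
            rw [← Real.rpow_mul (by norm_num)]
            rw [div_mul_div_comm, mul_comm δ 2, div_self (by positivity), Real.rpow_one]
        _ ≤ (p:ℝ) ^ (δ/2) := Real.rpow_le_rpow (Real.rpow_nonneg (by norm_num) _) hpge
            (by positivity)
    calc (∏ _p ∈ s, (12:ℝ)) ≤ ∏ p ∈ s, (p:ℝ) ^ (δ/2) :=
          Finset.prod_le_prod (fun _ _ => by norm_num) hbd
      _ = (∏ p ∈ s, (p:ℝ)) ^ (δ/2) :=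
          Real.finset_prod_rpow s _ (fun i _ => Nat.cast_nonneg i) _
      _ ≤ (c:ℝ) ^ (δ/2) := by
          apply Real.rpow_le_rpow (Finset.prod_nonneg fun i _ => Nat.cast_nonneg i) ?_
            (by positivity)
          have hdvd : (∏ p ∈ s, p) ∣ c := by
            refine dvd_trans (Finset.prod_dvd_prod_of_subset s c.primeFactors _ ?_)
              (Nat.prod_primeFactors_dvd c)
            exact Finset.filter_subset _ _
          have h := Nat.le_of_dvd (Nat.pos_of_ne_zero hc) hdvd
          calc (∏ p ∈ s, (p:ℝ)) = ((∏ p ∈ s, p : ℕ) : ℝ) := by push_cast; rfl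
            _ ≤ (c:ℝ) := by exact_mod_cast h
  calc (∏ _p ∈ c.primeFactors.filter (fun p => p < P), (12:ℝ)) *
        ∏ _p ∈ c.primeFactors.filter (fun p => ¬ p < P), (12:ℝ)
      ≤ 12 ^ P * (c:ℝ) ^ (δ/2) := by
        apply mul_le_mul h1 h2 (Finset.prod_nonneg fun _ _ => by norm_num) (by positivity)

lemma summable_norm_Ffun (N : ℕ) (γ : ℂ) (h0 : 0 < γ.re) (h2 : γ.re < 2) :
    Summable fun c : ℕ => ‖Ffun N γ c‖ := by
  set δ := γ.re with hδ
  set K : ℝ := 12 ^ (⌈(12:ℝ) ^ (2/δ)⌉₊) with hK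
  have hmaj : Summable fun c : ℕ => K * (c:ℝ) ^ (-1 - δ/2) := by
    apply Summable.mul_left
    exact Real.summable_nat_rpow.mpr (by linarith)
  refine hmaj.of_nonneg_of_le (fun _ => norm_nonneg _) fun c => ?_
  by_cases hc : c = 0
  · subst hc
    rw [Ffun_zero, norm_zero]
    positivity
  · have hcpos : (0:ℝ) < (c:ℝ) := by exact_mod_cast Nat.pos_of_ne_zero hc
    calc ‖Ffun N γ c‖ ≤ (c:ℝ) ^ (-1 - δ) * ∏ _p ∈ c.primeFactors, (12:ℝ) :=
          norm_Ffun_le N γ h2 c hc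
      _ ≤ (c:ℝ) ^ (-1 - δ) * (K * (c:ℝ) ^ (δ/2)) := by
          apply mul_le_mul_of_nonneg_left (prod_twelve_le δ h0 c hc)
            (Real.rpow_nonneg (le_of_lt hcpos) _)
      _ = K * ((c:ℝ) ^ (-1 - δ) * (c:ℝ) ^ (δ/2)) := by ring
      _ = K * (c:ℝ) ^ (-1 - δ/2) := by
          rw [← Real.rpow_add hcpos, show -1 - δ + δ/2 = -1 - δ/2 by ring]

lemma hasProd_Ffun (N : ℕ) (γ : ℂ) (h0 : 0 < γ.re) (h2 : γ.re < 2) :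
    HasProd (fun p : Nat.Primes => 1 + Ffun N γ p) (∑' c : ℕ, Ffun N γ c) := by
  have hP := EulerProduct.eulerProduct_hasProd (f := Ffun N γ) (Ffun_one N γ)
    (fun {m n} h => Ffun_mul N γ h) (summable_norm_Ffun N γ h0 h2) (Ffun_zero N γ)
  have key : (fun p : Nat.Primes => ∑' e : ℕ, Ffun N γ ((p:ℕ) ^ e))
      = fun p : Nat.Primes => 1 + Ffun N γ p := by
    funext p
    have hzero : ∀ e : ℕ, e ∉ ({0, 1} : Finset ℕ) → Ffun N γ ((p:ℕ) ^ e) = 0 := by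
      intro e he
      simp only [Finset.mem_insert, Finset.mem_singleton] at he
      push_neg at he
      have hμ : ArithmeticFunction.moebius ((p:ℕ) ^ e) = 0 := by
        rw [ArithmeticFunction.moebius_apply_prime_pow p.2 he.1]
        simp [he.2]
      rw [Ffun]
      split_ifs with h
      · rw [hμ]; simp
      · rfl
    rw [tsum_eq_sum hzero]
    rw [Finset.sum_pair (by norm_num : (0:ℕ) ≠ 1)]
    rw [pow_zero, pow_one, Ffun_one]
  rwa [key] at hP

lemma key_factor (N : ℕ) (γ : ℂ) (p : ℕ) (hp : p.Prime) (hdN : ¬ p ∣ N) :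
    fC p * (1 + Ffun N γ p) =
      1 - (p:ℂ) ^ (-γ - 1) - 2 * (p:ℂ) ^ (-1 - (1:ℂ))
        + 2 * (p:ℂ) ^ (-1 - γ - 1) + (p:ℂ) ^ (-2 - 2 * (1:ℂ))
        - (p:ℂ) ^ (-2 - 2 * (1:ℂ) - γ) := by
  have hx : (p:ℂ) ≠ 0 := Nat.cast_ne_zero.mpr hp.pos.ne'
  have hD : fC p ≠ 0 := fC_ne p hp.two_le
  have hF : Ffun N γ p = -((p:ℂ) ^ (-1 - γ)) * (gC γ p / fC p) := by
    rw [Ffun, if_pos ⟨hp.pos.ne', (Nat.Prime.coprime_iff_not_dvd hp).mpr hdN⟩,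
      Nat.Prime.primeFactors hp, Finset.prod_singleton,
      ArithmeticFunction.moebius_apply_prime hp]
    push_cast
    ring
  have step1 : fC p * (1 + Ffun N γ p) = fC p - (p:ℂ) ^ (-1 - γ) * gC γ p := by
    rw [hF]
    calc fC p * (1 + -((p:ℂ) ^ (-1 - γ)) * (gC γ p / fC p))
        = fC p + -((p:ℂ) ^ (-1 - γ)) * (gC γ p / fC p * fC p) := by ring
      _ = fC p - (p:ℂ) ^ (-1 - γ) * gC γ p := by
          rw [div_mul_cancel₀ _ hD]; ring
  rw [step1]
  unfold fC gC
  set x := (p:ℂ)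
  have hadd : ∀ a b : ℂ, x ^ (a + b) = x ^ a * x ^ b := fun a b => Complex.cpow_add a b hx
  rw [show (-γ - 1 : ℂ) = -1 - γ from by ring]
  rw [show (-1 - (1:ℂ)) = (-2:ℂ) from by norm_num]
  rw [show (-2 - 2 * (1:ℂ) - γ) = (-1 - γ) + (-3) from by ring, hadd]
  rw [show (-2 - 2 * (1:ℂ)) = (-1 - γ) + (γ - 3) from by ring, hadd]
  rw [show (-1 - γ - 1 : ℂ) = (-1 - γ) + (-1) from by ring, hadd]
  have hprod : x ^ (-1 - γ) * x ^ (γ - 2) = x ^ (-3:ℂ) := by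
    rw [← hadd]; congr 1; ring
  linear_combination -hprod

theorem statement16 (N : ℕ) (hN : 0 < N) (γ : ℂ) (h0 : 0 < γ.re) (h2 : γ.re < 2) :
    Summable (fun c : ℕ => ‖Cterm N γ c‖) ∧
    (∑' c : ℕ, Cterm N γ c) = Pprod N 1 γ := by
  set A : ℂ := ∏' p : Nat.Primes, if (p:ℕ) ∣ N then (1:ℂ) else fC p with hA
  have hsumF := summable_norm_Ffun N γ h0 h2
  constructor
  · have : (fun c : ℕ => ‖Cterm N γ c‖) = fun c : ℕ => ‖A‖ * ‖Ffun N γ c‖ := by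
      funext c
      rw [Cterm_eq N γ c, norm_mul]
    rw [this]
    exact hsumF.mul_left _
  · have hsum : (∑' c : ℕ, Cterm N γ c) = A * ∑' c : ℕ, Ffun N γ c := by
      rw [← tsum_mul_left]
      exact tsum_congr fun c => Cterm_eq N γ c
    rw [hsum]
    have hEuler := hasProd_Ffun N γ h0 h2
    rw [← hEuler.tprod_eq]
    rw [← Multipliable.tprod_mul (mult_v N) hEuler.multipliable]
    refine tprod_congr fun p => ?_
    by_cases hdN : (p:ℕ) ∣ N
    · have hF0 : Ffun N γ (p:ℕ) = 0 := by
        rw [Ffun, if_neg]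
        rintro ⟨-, hcop⟩
        exact p.2.one_lt.ne' ((Nat.Prime.coprime_iff_not_dvd p.2).mp hcop hdN |>.elim)
      simp [hdN, hF0]
    · have := key_factor N γ (p:ℕ) p.2 hdN
      simp only [hdN, if_true, if_false]
      exact this
end
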